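/- arXiv:1104.0600 — 8 statements merged into one kernel-verified Lean document; each statement's English description precedes it below -/
import Mathlib

section
/- Let A be a stably dissipative real n×n matrix. Then there exists a positive diagonal matrix D = diag(d_1,…,d_n), with all d_i > 0, such that for every w ∈ ℝⁿ: if ∑_{i,j=1}^n (a_ij/d_i) w_i w_j = 0, then a_ii w_i = 0 for every i = 1,…,n. -/
open Matrix

/-- A real `n × n` matrix `A` is dissipative if there is a positive diagonal
matrix `D = diag d` such that `xᵀ A D x ≤ 0` for all `x`. -/
def IsDissipative {n : ℕ} (A : Matrix (Fin n) (Fin n) ℝ) : Prop :=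
  ∃ d : Fin n → ℝ, (∀ i, 0 < d i) ∧
    ∀ x : Fin n → ℝ, ∑ i, ∑ j, x i * A i j * d j * x j ≤ 0

/-- `A` is stably dissipative if every sufficiently small perturbation
(preserving the zero pattern) is dissipative. -/
def IsStablyDissipative {n : ℕ} (A : Matrix (Fin n) (Fin n) ℝ) : Prop :=
  ∃ ε > (0 : ℝ), ∀ B : Matrix (Fin n) (Fin n) ℝ,
    (∀ i j, B i j = 0 ↔ A i j = 0) → (∀ i j, |A i j - B i j| < ε) →
    IsDissipative B

/-!
Shrinking the diagonal of `A` by a factor `1 - δ` is an admissible perturbation for small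
`δ > 0`, so `B = A - δ • diagonal (diag A)` is dissipative with some weight `d`. Substituting
`x = w / d` turns `xᵀ B D x ≤ 0` into `∑ (b_ij / d_i) w_i w_j ≤ 0`, that is
`∑ (a_ij / d_i) w_i w_j ≤ δ ∑ (a_ii / d_i) w_i²`. Testing on unit vectors gives `a_ii ≤ 0`, so
when the left side vanishes every term `a_ii w_i² / d_i` of the (nonpositive) right side must
vanish.
-/

open Filter Topology in
theorem exists_pos_lt_one_forall_mul_abs_lt {ι : Type*} [Finite ι] (c : ι → ℝ) {ε : ℝ}
    (hε : 0 < ε) : ∃ δ : ℝ, 0 < δ ∧ δ < 1 ∧ ∀ i, δ * |c i| < ε := by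
  have hsmall : ∀ᶠ δ in 𝓝 (0 : ℝ), δ < 1 ∧ ∀ i, δ * |c i| < ε := by
    refine (gt_mem_nhds one_pos).and (eventually_all.2 fun i => ?_)
    have hlim : Tendsto (fun δ : ℝ => δ * |c i|) (𝓝 0) (𝓝 0) := by
      simpa using (continuous_mul_const |c i|).tendsto (0 : ℝ)
    exact hlim.eventually (gt_mem_nhds hε)
  obtain ⟨δ, ⟨hδ1, hδε⟩, hδ0⟩ :=
    ((hsmall.filter_mono nhdsWithin_le_nhds).and self_mem_nhdsWithin).exists (f := 𝓝[>] 0)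
  exact ⟨δ, hδ0, hδ1, hδε⟩

theorem sub_smul_diagonal_diag_apply_self {ι : Type*} [DecidableEq ι] (A : Matrix ι ι ℝ) (δ : ℝ)
    (i : ι) : (A - δ • diagonal (diag A)) i i = (1 - δ) * A i i := by
  simp only [Matrix.sub_apply, Matrix.smul_apply, diagonal_apply_eq, diag_apply, smul_eq_mul]
  ring

theorem sub_smul_diagonal_diag_apply_eq_zero_iff {ι : Type*} [DecidableEq ι]
    (A : Matrix ι ι ℝ) {δ : ℝ} (hδ : δ ≠ 1) (i j : ι) :
    (A - δ • diagonal (diag A)) i j = 0 ↔ A i j = 0 := by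
  by_cases h : i = j
  · subst h
    rw [sub_smul_diagonal_diag_apply_self, mul_eq_zero, or_iff_right (sub_ne_zero.2 hδ.symm)]
  · simp [h]

theorem IsStablyDissipative.exists_isDissipative_sub_smul_diagonal {n : ℕ}
    {A : Matrix (Fin n) (Fin n) ℝ} (hA : IsStablyDissipative A) :
    ∃ δ : ℝ, 0 < δ ∧ δ < 1 ∧ IsDissipative (A - δ • diagonal (diag A)) := by
  obtain ⟨ε, hε, hA⟩ := hA
  obtain ⟨δ, hδ0, hδ1, hδε⟩ := exists_pos_lt_one_forall_mul_abs_lt (fun i => A i i) hε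
  refine ⟨δ, hδ0, hδ1, hA _ (sub_smul_diagonal_diag_apply_eq_zero_iff A hδ1.ne) fun i j => ?_⟩
  by_cases h : i = j
  · subst h; simpa [abs_mul, abs_of_pos hδ0] using hδε i
  · simpa [h] using hε

section ScaledForm

variable {ι : Type*} [Fintype ι]

noncomputable def scaledForm (M : Matrix ι ι ℝ) (d w : ι → ℝ) : ℝ :=
  ∑ i, ∑ j, M i j / d i * w i * w j

theorem scaledForm_eq_of_ne_zero (M : Matrix ι ι ℝ) {d : ι → ℝ} (hd : ∀ i, d i ≠ 0)
    (w : ι → ℝ) :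
    scaledForm M d w = ∑ i, ∑ j, (w i / d i) * M i j * d j * (w j / d j) := by
  unfold scaledForm
  refine Finset.sum_congr rfl fun i _ => Finset.sum_congr rfl fun j _ => ?_
  field_simp [hd i, hd j]

variable [DecidableEq ι]

theorem scaledForm_single (M : Matrix ι ι ℝ) (d : ι → ℝ) (k : ι) :
    scaledForm M d (Pi.single k 1) = M k k / d k := by
  simp [scaledForm, Pi.single_apply]

theorem scaledForm_sub_smul_diagonal (A : Matrix ι ι ℝ) (δ : ℝ) (d w : ι → ℝ) :
    scaledForm (A - δ • diagonal (diag A)) d w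
      = scaledForm A d w - δ * ∑ i, A i i / d i * w i ^ 2 := by
  have hterm : ∀ i j, (A - δ • diagonal (diag A)) i j / d i * w i * w j
      = A i j / d i * w i * w j - if i = j then δ * (A i i / d i * w i ^ 2) else 0 := by
    intro i j
    by_cases h : i = j
    · subst h
      rw [sub_smul_diagonal_diag_apply_self, if_pos rfl]
      ring
    · simp [h]
  simp only [scaledForm, hterm, Finset.sum_sub_distrib, Finset.sum_ite_eq, Finset.mem_univ,
    if_true, Finset.mul_sum]

theorem diag_nonpos_of_forall_scaledForm_nonpos {M : Matrix ι ι ℝ} {d : ι → ℝ} {k : ι}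
    (hd : 0 < d k) (hM : ∀ w, scaledForm M d w ≤ 0) : M k k ≤ 0 := by
  have h := hM (Pi.single k 1)
  rw [scaledForm_single] at h
  simpa using (div_le_iff₀ hd).1 h

end ScaledForm

theorem diag_mul_eq_zero_of_sum_nonneg {ι : Type*} [Fintype ι] {a d w : ι → ℝ}
    (ha : ∀ i, a i ≤ 0) (hd : ∀ i, 0 < d i) (hsum : 0 ≤ ∑ i, a i / d i * w i ^ 2) (i : ι) :
    a i * w i = 0 := by
  have hterm : ∀ k ∈ Finset.univ, a k / d k * w k ^ 2 ≤ 0 := fun k _ =>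
    mul_nonpos_of_nonpos_of_nonneg (div_nonpos_of_nonpos_of_nonneg (ha k) (hd k).le) (sq_nonneg _)
  have hi := (Finset.sum_eq_zero_iff_of_nonpos hterm).1
    (le_antisymm (Finset.sum_nonpos hterm) hsum) i (Finset.mem_univ i)
  rcases mul_eq_zero.1 hi with h | h
  · simp [(div_eq_zero_iff.1 h).resolve_right (hd i).ne']
  · simp [pow_eq_zero_iff two_ne_zero |>.1 h]

theorem IsDissipative.exists_scaledForm_nonpos {n : ℕ} {B : Matrix (Fin n) (Fin n) ℝ}
    (hB : IsDissipative B) : ∃ d : Fin n → ℝ, (∀ i, 0 < d i) ∧ ∀ w, scaledForm B d w ≤ 0 := by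
  obtain ⟨d, hd, hform⟩ := hB
  refine ⟨d, hd, fun w => ?_⟩
  rw [scaledForm_eq_of_ne_zero B (fun i => (hd i).ne')]
  exact hform _

/-- For a stably dissipative matrix `A` there is a positive diagonal matrix
`D = diag d` such that `∑ (a_ij / d_i) w_i w_j = 0` forces `a_ii w_i = 0` for all `i`. -/
theorem stmt0 {n : ℕ} (A : Matrix (Fin n) (Fin n) ℝ)
    (hA : IsStablyDissipative A) :
    ∃ d : Fin n → ℝ, (∀ i, 0 < d i) ∧
      ∀ w : Fin n → ℝ,
        (∑ i, ∑ j, (A i j / d i) * w i * w j = 0) →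
        ∀ i, A i i * w i = 0 := by
  obtain ⟨δ, hδ0, hδ1, hB⟩ := hA.exists_isDissipative_sub_smul_diagonal
  obtain ⟨d, hd, hform⟩ := hB.exists_scaledForm_nonpos
  have hdiag : ∀ k, A k k ≤ 0 := fun k => by
    have h := diag_nonpos_of_forall_scaledForm_nonpos (hd k) hform
    rw [sub_smul_diagonal_diag_apply_self] at h
    exact nonpos_of_mul_nonpos_right h (sub_pos.2 hδ1)
  refine ⟨d, hd, fun w hw => diag_mul_eq_zero_of_sum_nonneg hdiag hd ?_⟩
  have h := hform w
  rw [scaledForm_sub_smul_diagonal, scaledForm, hw, zero_sub, neg_nonpos] at h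
  exact (mul_nonneg_iff_of_pos_left hδ0).1 h
end

section
/- Let A be a dissipative real n×n matrix and q ∈ ℝⁿ₊. If x, y ∈ ℝⁿ₊ satisfy A(x − q) = 0, A(y − q) = 0, and ∑_{i=1}^n w_i log x_i = ∑_{i=1}^n w_i log y_i for every w ∈ Ker(Aᵀ), then x = y. (In other words, each leaf of the invariant foliation defined by the first integrals x ↦ ∑_i w_i log x_i, w ∈ Ker(Aᵀ), intersects the set of equilibria E_{A,q} = {x ∈ ℝⁿ₊ : A(x − q) = 0} in at most one point.) -/
/-!
Since `A` kills `x - y`, dissipativity with weights `d` forces `Aᵀ` to kill `u = D⁻¹(x - y)`: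
if `vᵀBv ≤ 0` for all `v` and `Bu = 0`, then `Bᵀu = 0`, since the semidefinite matrix `B + Bᵀ` has
`uᵀ(B + Bᵀ)u = 0`. Hence `u` is an admissible `w`, and the hypothesis gives
`∑ (x i - y i) (log x i - log y i) / d i = 0`. Every term is nonnegative because `log` is
increasing, and vanishes only when `x i = y i`.
-/

open Matrix

namespace Matrix

variable {ι : Type*} [Fintype ι]

theorem transpose_mulVec_eq_zero_of_mulVec_eq_zero {B : Matrix ι ι ℝ}
    (hB : ∀ v, v ⬝ᵥ B *ᵥ v ≤ 0) {u : ι → ℝ} (hu : B *ᵥ u = 0) : Bᵀ *ᵥ u = 0 := by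
  have hBt : ∀ v, v ⬝ᵥ Bᵀ *ᵥ v = v ⬝ᵥ B *ᵥ v := fun v => by
    rw [dotProduct_mulVec, vecMul_transpose, dotProduct_comm]
  have hS : (-(B + Bᵀ)).PosSemidef := by
    rw [posSemidef_iff_dotProduct_mulVec]
    refine ⟨by simp [IsHermitian, add_comm], fun v => ?_⟩
    simp only [star_trivial, neg_mulVec, add_mulVec, dotProduct_neg, dotProduct_add, hBt]
    linarith [hB v]
  have hSu : -(B + Bᵀ) *ᵥ u = 0 := by
    refine (hS.dotProduct_mulVec_zero_iff u).mp ?_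
    simp only [star_trivial, neg_mulVec, add_mulVec, dotProduct_neg, dotProduct_add, hBt, hu,
      dotProduct_zero, add_zero, neg_zero]
  simpa [neg_mulVec, add_mulVec, hu] using hSu

end Matrix

theorem dotProduct_mul_diagonal_mulVec {n : ℕ} (A : Matrix (Fin n) (Fin n) ℝ) (d v : Fin n → ℝ) :
    v ⬝ᵥ (A * diagonal d) *ᵥ v = ∑ i, ∑ j, v i * A i j * d j * v j := by
  simp [dotProduct, mulVec, Finset.mul_sum, mul_diagonal, mul_assoc]

theorem IsDissipative.exists_transpose_mulVec_div_eq_zero {n : ℕ}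
    {A : Matrix (Fin n) (Fin n) ℝ} (hA : IsDissipative A) :
    ∃ d : Fin n → ℝ, (∀ i, 0 < d i) ∧ ∀ v, A *ᵥ v = 0 → Aᵀ *ᵥ (v / d) = 0 := by
  obtain ⟨d, hd, hdiss⟩ := hA
  refine ⟨d, hd, fun v hv => ?_⟩
  have hdv : diagonal d *ᵥ (v / d) = v := by
    ext i
    simp [mulVec_diagonal, mul_div_cancel₀ _ (hd i).ne']
  have hBt : (A * diagonal d)ᵀ *ᵥ (v / d) = 0 := by
    refine transpose_mulVec_eq_zero_of_mulVec_eq_zero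
      (fun w => (dotProduct_mul_diagonal_mulVec A d w).trans_le (hdiss w)) ?_
    rw [← mulVec_mulVec, hdv, hv]
  ext k
  have hk := congrFun hBt k
  rw [transpose_mul, diagonal_transpose, ← mulVec_mulVec, mulVec_diagonal] at hk
  exact (mul_eq_zero.mp hk).resolve_left (hd k).ne'

theorem Real.sub_mul_log_sub_log_nonneg {a b : ℝ} (ha : 0 < a) (hb : 0 < b) :
    0 ≤ (a - b) * (Real.log a - Real.log b) := by
  rcases le_total a b with hab | hab
  · exact mul_nonneg_of_nonpos_of_nonpos (by linarith) (by linarith [Real.log_le_log ha hab])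
  · exact mul_nonneg (by linarith) (by linarith [Real.log_le_log hb hab])

theorem Real.eq_of_sub_mul_log_sub_log_eq_zero {a b : ℝ} (ha : 0 < a) (hb : 0 < b)
    (h : (a - b) * (Real.log a - Real.log b) = 0) : a = b := by
  rcases mul_eq_zero.mp h with h | h
  · exact sub_eq_zero.mp h
  · exact Real.log_injOn_pos ha hb (sub_eq_zero.mp h)

theorem eq_of_sum_div_mul_log_sub_log_eq_zero {ι : Type*} [Fintype ι] {x y d : ι → ℝ}
    (hx : ∀ i, 0 < x i) (hy : ∀ i, 0 < y i) (hd : ∀ i, 0 < d i)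
    (h : ∑ i, (x i - y i) / d i * (Real.log (x i) - Real.log (y i)) = 0) : x = y := by
  have hterm : ∀ i, (x i - y i) / d i * (Real.log (x i) - Real.log (y i))
      = (x i - y i) * (Real.log (x i) - Real.log (y i)) / d i := fun i => div_mul_eq_mul_div ..
  simp only [hterm] at h
  have hnonneg : ∀ i ∈ Finset.univ, 0 ≤ (x i - y i) * (Real.log (x i) - Real.log (y i)) / d i :=
    fun i _ => div_nonneg (Real.sub_mul_log_sub_log_nonneg (hx i) (hy i)) (hd i).le
  funext i
  have hi := (Finset.sum_eq_zero_iff_of_nonneg hnonneg).mp h i (Finset.mem_univ i)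
  exact Real.eq_of_sub_mul_log_sub_log_eq_zero (hx i) (hy i)
    ((div_eq_zero_iff.mp hi).resolve_right (hd i).ne')

theorem stmt3_general {n : ℕ} (A : Matrix (Fin n) (Fin n) ℝ) (hA : IsDissipative A)
    (q x y : Fin n → ℝ)
    (hx : ∀ i, 0 < x i) (hy : ∀ i, 0 < y i)
    (hex : A.mulVec (x - q) = 0) (hey : A.mulVec (y - q) = 0)
    (hlog : ∀ w : Fin n → ℝ, Aᵀ.mulVec w = 0 →
      ∑ i, w i * Real.log (x i) = ∑ i, w i * Real.log (y i)) :
    x = y := by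
  obtain ⟨d, hd, hker⟩ := hA.exists_transpose_mulVec_div_eq_zero
  have hxy : A *ᵥ (x - y) = 0 := by
    rw [← sub_sub_sub_cancel_right x y q, mulVec_sub, hex, hey, sub_zero]
  have hw := hlog _ (hker _ hxy)
  refine eq_of_sum_div_mul_log_sub_log_eq_zero hx hy hd ?_
  simpa only [Pi.div_apply, Pi.sub_apply, mul_sub, Finset.sum_sub_distrib, sub_eq_zero] using hw

/-- For a dissipative matrix `A` and `q` in the open positive orthant: if two
equilibria `x, y ∈ E_{A,q}` (i.e. positive points with `A(x-q) = 0 = A(y-q)`)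
have the same values of all the first integrals `x ↦ ∑ i, w i * log (x i)`,
`w ∈ Ker(Aᵀ)`, then `x = y`.  In other words, each leaf of the invariant
foliation meets the equilibria set in at most one point. -/
theorem stmt3 {n : ℕ} (A : Matrix (Fin n) (Fin n) ℝ) (hA : IsDissipative A)
    (q x y : Fin n → ℝ)
    (hq : ∀ i, 0 < q i) (hx : ∀ i, 0 < x i) (hy : ∀ i, 0 < y i)
    (hex : A.mulVec (x - q) = 0) (hey : A.mulVec (y - q) = 0)
    (hlog : ∀ w : Fin n → ℝ, Aᵀ.mulVec w = 0 →
      ∑ i, w i * Real.log (x i) = ∑ i, w i * Real.log (y i)) :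
    x = y :=
  stmt3_general A hA q x y hx hy hex hey hlog
end

section
/- If A is a stably dissipative real n×n matrix, then every cycle of the graph G_A contains at least one strong link, i.e. an edge {i, j} with a_ii < 0 and a_jj < 0. -/
open Matrix

/-- The graph `G_A` of a matrix `A`: vertices `1, …, n`, with an edge between
`i ≠ j` iff `a_ij ≠ 0` or `a_ji ≠ 0`. -/
def graphOf {n : ℕ} (A : Matrix (Fin n) (Fin n) ℝ) : SimpleGraph (Fin n) where
  Adj i j := i ≠ j ∧ (A i j ≠ 0 ∨ A j i ≠ 0)
  symm := ⟨fun _ _ h => ⟨h.1.symm, h.2.symm⟩⟩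
  loopless := ⟨fun _ h => h.1 rfl⟩


/-! If no edge of the cycle is a strong link, every edge `{i, j}` of it has a white endpoint, and
testing `xᵀ A D x ≤ 0` on vectors supported on `{i, j}` forces `a_ij d_j + a_ji d_i = 0`, so that
`a_ij ≠ 0 ↔ a_ji ≠ 0`. Multiplying these relations around the cycle eliminates `D`: the product of
the `a_ij` along the cycle equals the product of the `-a_ji`, and both are nonzero. Scaling the
entry `a_vb` of one edge `{v, b}` slightly keeps `A` dissipative, and since a cycle traverses that
edge only once, it changes one side of this identity and not the other. -/

lemma eq_zero_of_forall_mul_add_nonpos {𝕜 : Type*} [Field 𝕜] [LinearOrder 𝕜]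
    [IsStrictOrderedRing 𝕜] {c r : 𝕜} (h : ∀ s, c * s + r ≤ 0) : c = 0 := by
  by_contra hc
  have := h ((1 - r) / c)
  rw [mul_div_cancel₀ _ hc] at this
  linarith

section QuadraticForm

variable {ι 𝕜 : Type*} [Fintype ι] {A : Matrix ι ι 𝕜} {d : ι → 𝕜}

lemma sum_sum_mul_of_forall_ne_eq_zero [CommSemiring 𝕜] {i : ι} {x : ι → 𝕜}
    (hx : ∀ k, k ≠ i → x k = 0) :
    ∑ k, ∑ l, x k * A k l * d l * x l = A i i * d i * x i ^ 2 := by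
  rw [Fintype.sum_eq_single i fun k hk => by simp [hx k hk],
    Fintype.sum_eq_single i fun l hl => by simp [hx l hl]]
  ring

lemma sum_sum_mul_of_forall_ne_ne_eq_zero [CommSemiring 𝕜] {i j : ι} (hij : i ≠ j) {x : ι → 𝕜}
    (hx : ∀ k, k ≠ i ∧ k ≠ j → x k = 0) :
    ∑ k, ∑ l, x k * A k l * d l * x l =
      A i i * d i * x i ^ 2 + (A i j * d j + A j i * d i) * x i * x j + A j j * d j * x j ^ 2 := by
  have hrow (k : ι) :
      ∑ l, x k * A k l * d l * x l = x k * A k i * d i * x i + x k * A k j * d j * x j :=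
    Fintype.sum_eq_add i j hij fun l hl => by simp [hx l hl]
  rw [Fintype.sum_congr _ _ hrow, Fintype.sum_eq_add i j hij fun k hk => by simp [hx k hk]]
  ring

variable [DecidableEq ι] [Field 𝕜] [LinearOrder 𝕜] [IsStrictOrderedRing 𝕜]

lemma diag_nonpos_of_forall_sum_sum_nonpos
    (hq : ∀ x : ι → 𝕜, ∑ i, ∑ j, x i * A i j * d j * x j ≤ 0) (hd : ∀ i, 0 < d i) (i : ι) :
    A i i ≤ 0 := by
  have h := hq (Pi.single i 1)
  rw [sum_sum_mul_of_forall_ne_eq_zero fun k hk => Pi.single_eq_of_ne hk _] at h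
  exact nonpos_of_mul_nonpos_left (by simpa using h) (hd i)

lemma balanced_of_forall_sum_sum_nonpos
    (hq : ∀ x : ι → 𝕜, ∑ i, ∑ j, x i * A i j * d j * x j ≤ 0) {i j : ι} (hij : i ≠ j)
    (hi : A i i = 0) : A i j * d j + A j i * d i = 0 := by
  refine eq_zero_of_forall_mul_add_nonpos (r := A j j * d j) fun s => ?_
  have h := hq (Pi.single i s + Pi.single j 1)
  rw [sum_sum_mul_of_forall_ne_ne_eq_zero hij fun k hk => by simp [hk.1, hk.2]] at h
  simpa [hij, hij.symm, hi] using h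

end QuadraticForm

theorem SimpleGraph.Walk.mul_prod_darts_eq {V R : Type*} [CommRing R] {G : SimpleGraph V}
    (a : V → V → R) (d : V → R) {u v : V} (p : G.Walk u v)
    (h : ∀ e ∈ p.darts, a e.fst e.snd * d e.snd + a e.snd e.fst * d e.fst = 0) :
    d v * (p.darts.map fun e => a e.fst e.snd).prod =
      d u * (p.darts.map fun e => -a e.snd e.fst).prod := by
  induction p with
  | nil => simp
  | @cons x y z hxy p ih =>
    have hx : a x y * d y + a y x * d x = 0 := h ⟨(x, y), hxy⟩ (by simp)
    have ih' := ih fun e he => h e (by simp [he])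
    simp only [darts_cons, List.map_cons, List.prod_cons]
    linear_combination a x y * ih' + (p.darts.map fun e => -a e.snd e.fst).prod * hx

theorem SimpleGraph.Walk.apply_eq_of_mem_darts_of_notMem_edges {V R : Type*} {G : SimpleGraph V}
    {u w v b : V} {p : G.Walk u w} (hp : s(v, b) ∉ p.edges) {f g : V → V → R}
    (hfg : ∀ i j, (i, j) ≠ (v, b) → f i j = g i j) {e : G.Dart} (he : e ∈ p.darts) :
    f e.fst e.snd = g e.fst e.snd ∧ f e.snd e.fst = g e.snd e.fst := by
  have hedge : s(e.fst, e.snd) ≠ s(v, b) := fun h => hp (h ▸ List.mem_map_of_mem he)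
  refine ⟨hfg _ _ ?_, hfg _ _ ?_⟩ <;> rintro ⟨⟩
  exacts [hedge rfl, hedge Sym2.eq_swap]

section Dissipative

variable {n : ℕ} {A : Matrix (Fin n) (Fin n) ℝ}

theorem IsDissipative.diag_nonpos (hA : IsDissipative A) (i : Fin n) : A i i ≤ 0 :=
  let ⟨_, hd, hq⟩ := hA
  diag_nonpos_of_forall_sum_sum_nonpos hq hd i

theorem IsDissipative.exists_balanced (hA : IsDissipative A) :
    ∃ d : Fin n → ℝ, (∀ i, 0 < d i) ∧ ∀ i j, i ≠ j → (A i i = 0 ∨ A j j = 0) →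
      A i j * d j + A j i * d i = 0 := by
  obtain ⟨d, hd, hq⟩ := hA
  refine ⟨d, hd, fun i j hij hw => ?_⟩
  rcases hw with hi | hj
  · exact balanced_of_forall_sum_sum_nonpos hq hij hi
  · linarith [balanced_of_forall_sum_sum_nonpos hq hij.symm hj]

theorem IsDissipative.eq_zero_iff_eq_zero (hA : IsDissipative A) {i j : Fin n} (hij : i ≠ j)
    (hw : A i i = 0 ∨ A j j = 0) : A i j = 0 ↔ A j i = 0 := by
  obtain ⟨d, hd, hbal⟩ := hA.exists_balanced
  have h : A i j * d j = -(A j i * d i) := eq_neg_of_add_eq_zero_left (hbal i j hij hw)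
  constructor <;> intro h0 <;> simpa [h0, (hd i).ne', (hd j).ne'] using h

theorem IsDissipative.prod_darts_eq {G : SimpleGraph (Fin n)} (hA : IsDissipative A) {u : Fin n}
    (w : G.Walk u u) (hw : ∀ e ∈ w.darts, A e.fst e.fst = 0 ∨ A e.snd e.snd = 0) :
    (w.darts.map fun e => A e.fst e.snd).prod = (w.darts.map fun e => -A e.snd e.fst).prod := by
  obtain ⟨d, hd, hbal⟩ := hA.exists_balanced
  exact mul_left_cancel₀ (hd u).ne'
    (w.mul_prod_darts_eq A d fun e he => hbal _ _ (G.ne_of_adj e.adj) (hw e he))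

theorem IsDissipative.prod_darts_ne_zero (hA : IsDissipative A) {u v : Fin n}
    (p : (graphOf A).Walk u v) (hp : ∀ e ∈ p.darts, A e.fst e.fst = 0 ∨ A e.snd e.snd = 0) :
    (p.darts.map fun e => A e.fst e.snd).prod ≠ 0 := by
  refine List.prod_ne_zero fun h0 => ?_
  obtain ⟨e, he, h0⟩ := List.mem_map.mp h0
  obtain ⟨hne, hadj⟩ := e.adj
  exact hadj.elim (· h0) (· ((hA.eq_zero_iff_eq_zero hne (hp e he)).mp h0))

theorem IsStablyDissipative.isDissipative (hA : IsStablyDissipative A) : IsDissipative A :=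
  let ⟨_, hε, h⟩ := hA
  h A (fun _ _ => Iff.rfl) fun _ _ => by simpa using hε

theorem IsStablyDissipative.exists_isDissipative_ne (hA : IsStablyDissipative A) {v b : Fin n}
    (hvb : A v b ≠ 0) :
    ∃ B : Matrix (Fin n) (Fin n) ℝ, IsDissipative B ∧ B v b ≠ A v b ∧
      ∀ i j, (i, j) ≠ (v, b) → B i j = A i j := by
  obtain ⟨ε, hε, h⟩ := hA
  set δ := ε / (|A v b| + 1)
  have hδ : 0 < δ := by positivity
  let B : Matrix (Fin n) (Fin n) ℝ := fun i j => if (i, j) = (v, b) then (1 + δ) * A v b else A i j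
  have hoff : ∀ i j, (i, j) ≠ (v, b) → B i j = A i j := fun i j h => if_neg h
  have hBvb : B v b = A v b + δ * A v b := by simp only [B, if_pos]; ring
  have hclose : |A v b - B v b| < ε := by
    rw [hBvb, sub_add_cancel_left, abs_neg, abs_mul, abs_of_pos hδ]
    calc δ * |A v b| < δ * (|A v b| + 1) := by gcongr; linarith
      _ = ε := div_mul_cancel₀ _ (by positivity)
  refine ⟨B, h B (fun i j => ?_) (fun i j => ?_), by simp [hBvb, hvb, hδ.ne'], hoff⟩
  all_goals rcases eq_or_ne (i, j) (v, b) with hij | hij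
  · obtain ⟨rfl, rfl⟩ := Prod.mk.inj hij
    simp [hBvb, hvb, ← one_add_mul, (by positivity : 1 + δ ≠ 0)]
  · rw [hoff i j hij]
  · obtain ⟨rfl, rfl⟩ := Prod.mk.inj hij
    exact hclose
  · simpa [hoff i j hij] using hε

end Dissipative

/-- If `A` is stably dissipative, then every cycle of `G_A` contains a strong
link, i.e. an edge `{i, j}` with `a_ii < 0` and `a_jj < 0`. -/
theorem stmt4 {n : ℕ} (A : Matrix (Fin n) (Fin n) ℝ)
    (hA : IsStablyDissipative A) (v : Fin n)
    (w : (graphOf A).Walk v v) (hw : w.IsCycle) :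
    ∃ i j : Fin n, s(i, j) ∈ w.edges ∧ A i i < 0 ∧ A j j < 0 := by
  by_contra! hstrong
  have hAd := hA.isDissipative
  have hweak : ∀ e ∈ w.darts, A e.fst e.fst = 0 ∨ A e.snd e.snd = 0 := fun e he =>
    (hAd.diag_nonpos e.fst).lt_or_eq.symm.imp_right fun h =>
      le_antisymm (hAd.diag_nonpos _) (hstrong _ _ (List.mem_map_of_mem he) h)
  cases w with
  | nil => exact hw.ne_nil rfl
  | @cons _ b _ hvb p =>
    have hp : s(v, b) ∉ p.edges := (List.nodup_cons.mp hw.edges_nodup).1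
    have hne := hAd.prod_darts_ne_zero _ hweak
    simp only [SimpleGraph.Walk.darts_cons, List.map_cons, List.prod_cons, mul_ne_zero_iff] at hne
    obtain ⟨B, hB, hBvb, hBA⟩ := hA.exists_isDissipative_ne hne.1
    have hdiag (i : Fin n) : B i i = A i i := hBA i i fun h => hvb.1 (by grind)
    have hA_bal := hAd.prod_darts_eq _ hweak
    have hB_bal := hB.prod_darts_eq _ (by simpa only [hdiag] using hweak)
    have hoff (e) (he : e ∈ p.darts) := p.apply_eq_of_mem_darts_of_notMem_edges hp hBA he
    simp only [SimpleGraph.Walk.darts_cons, List.map_cons, List.prod_cons,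
      hBA b v fun h => hvb.1 (by grind)] at hA_bal hB_bal
    rw [List.map_congr_left fun e he => (hoff e he).1,
      List.map_congr_left fun e he => congrArg Neg.neg (hoff e he).2] at hB_bal
    exact hBvb (mul_right_cancel₀ hne.2 (by linear_combination hB_bal - hA_bal))
end

section
/- Let A be a stably dissipative real n×n matrix. If A is nonsingular, then the R-closure of the graph G_A equals the full vertex set {1,…,n}. -/
/-!
Let `S` contain the black vertices and be closed under (R), and suppose its complement `W` is
nonempty. Vertices of `W` are white, so for a scaling `d` making `A` dissipative the quadratic
form forces `a_kj d_j + a_jk d_k = 0` for `k ∈ W`: along every edge touching `W` the pattern is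
symmetric and `d_i / d_j = -a_ij / a_ji`. Multiplying the entries `a_ij`, `i < j`, by `exp (t w_ij)`
gives a dissipative matrix for small `t > 0`, and comparing the two scalings writes any `w` as
a difference `u_i - u_j` along these edges. Hence they form a forest on `W ∪ N`, `N` being the
neighbours of `W` outside `W`. By (R) every vertex with a neighbour in `W` has at least two, and
counting edges gives fewer rows meeting the columns `W` than there are such columns, so those
columns are dependent and `det A = 0`.
-/

open Matrix

/-- The R-closure of a black-and-white graph: the smallest set of vertices
containing all black vertices and closed under the reduction rule (R). -/
def RClosure {V : Type*} (G : SimpleGraph V) (black : Set V) : Set V :=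
  ⋂₀ {S : Set V | black ⊆ S ∧
    ∀ j k, G.Adj j k → (∀ l, G.Adj j l → l = k ∨ l ∈ S) → k ∈ S}

open Finset

theorem eq_zero_of_forall_mul_add_nonpos_s10 {a b : ℝ} (h : ∀ t : ℝ, t * a + b ≤ 0) : a = 0 := by
  by_contra ha
  have := h ((1 - b) / a)
  rw [div_mul_cancel₀ _ ha] at this
  linarith

section QuadraticForm

variable {ι : Type*} [Fintype ι] [DecidableEq ι] {B : Matrix ι ι ℝ} {d : ι → ℝ}

theorem diag_mul_nonpos_of_quadForm_nonpos
    (hq : ∀ x : ι → ℝ, ∑ i, ∑ j, x i * B i j * d j * x j ≤ 0) (k : ι) :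
    B k k * d k ≤ 0 := by
  simpa [Pi.single_apply] using hq (Pi.single k 1)

theorem skew_of_diag_eq_zero
    (hq : ∀ x : ι → ℝ, ∑ i, ∑ j, x i * B i j * d j * x j ≤ 0) {k : ι} (hk : B k k = 0)
    (j : ι) : B k j * d j + B j k * d k = 0 := by
  refine eq_zero_of_forall_mul_add_nonpos_s10 (b := B j j * d j) fun t => ?_
  have := hq (Pi.single k t + Pi.single j 1)
  simp only [Pi.add_apply, Pi.single_apply, add_mul, ite_mul, zero_mul, one_mul, mul_add, mul_ite,
    mul_zero, mul_one, sum_add_distrib, sum_ite_eq', mem_univ, ↓reduceIte, hk, zero_add] at this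
  linarith

theorem ne_zero_iff_of_diag_eq_zero (hd : ∀ i, 0 < d i)
    (hq : ∀ x : ι → ℝ, ∑ i, ∑ j, x i * B i j * d j * x j ≤ 0) {k : ι} (hk : B k k = 0)
    (i : ι) : B i k ≠ 0 ↔ B k i ≠ 0 := by
  have hskew := skew_of_diag_eq_zero hq hk i
  rw [not_iff_not]
  constructor <;> intro h <;> simpa [h, (hd _).ne'] using hskew

theorem div_eq_neg_div_of_diag_eq_zero (hd : ∀ i, 0 < d i)
    (hq : ∀ x : ι → ℝ, ∑ i, ∑ j, x i * B i j * d j * x j ≤ 0) {i j : ι} (hij : B i j ≠ 0)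
    (hwhite : B i i = 0 ∨ B j j = 0) : d i / d j = -(B i j / B j i) := by
  have hskew : B i j * d j + B j i * d i = 0 := by
    rcases hwhite with h | h
    · exact skew_of_diag_eq_zero hq h j
    · linarith [skew_of_diag_eq_zero hq h i]
  have hji : B j i ≠ 0 := hwhite.elim (fun h => (ne_zero_iff_of_diag_eq_zero hd hq h j).mpr hij)
    fun h => (ne_zero_iff_of_diag_eq_zero hd hq h i).mp hij
  rw [eq_neg_iff_add_eq_zero, div_add_div _ _ (hd j).ne' hji, div_eq_zero_iff]
  left
  linarith

end QuadraticForm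

namespace IsStablyDissipative

variable {n : ℕ} {A : Matrix (Fin n) (Fin n) ℝ}

theorem isDissipative_s10 (hA : IsStablyDissipative A) : IsDissipative A := by
  obtain ⟨ε, hε, h⟩ := hA
  exact h A (fun _ _ => Iff.rfl) (fun _ _ => by simpa using hε)

open Filter Topology in
theorem exists_pos_isDissipative_hadamard_exp (hA : IsStablyDissipative A)
    (f : Matrix (Fin n) (Fin n) ℝ) :
    ∃ t > (0 : ℝ), IsDissipative (A ⊙ (t • f).map Real.exp) := by
  obtain ⟨ε, hε, h⟩ := hA
  have hclose : ∀ᶠ t in 𝓝[>] (0 : ℝ), ∀ i j, |A i j - (A ⊙ (t • f).map Real.exp) i j| < ε := by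
    simp only [Filter.eventually_all, Matrix.hadamard_apply, Matrix.map_apply, Matrix.smul_apply,
      smul_eq_mul]
    intro i j
    have hcont : Continuous fun t => |A i j - A i j * Real.exp (t * f i j)| := by fun_prop
    have := hcont.tendsto 0
    simp only [zero_mul, Real.exp_zero, mul_one, sub_self, abs_zero] at this
    exact (this.eventually (gt_mem_nhds hε)).filter_mono nhdsWithin_le_nhds
  obtain ⟨t, ht, ht0⟩ := (hclose.and self_mem_nhdsWithin).exists
  exact ⟨t, ht0, h _ (fun i j => by simp [Real.exp_ne_zero]) ht⟩

theorem exists_sub_eq (hA : IsStablyDissipative A) (w : Fin n × Fin n → ℝ) :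
    ∃ u : Fin n → ℝ, ∀ i j, i < j → A i j ≠ 0 → (A i i = 0 ∨ A j j = 0) →
      u i - u j = w (i, j) := by
  obtain ⟨d, hd, hq⟩ := hA.isDissipative_s10
  -- Only entries above the diagonal are rescaled, so on an edge `i < j` the ratio
  -- `-a_ij / a_ji`, hence `d'_i / d'_j`, gains exactly the factor `exp (t w_ij)`.
  obtain ⟨t, ht, d', hd', hq'⟩ := hA.exists_pos_isDissipative_hadamard_exp
    (Matrix.of fun i j => if i < j then w (i, j) else 0)
  refine ⟨fun i => (Real.log (d' i) - Real.log (d i)) / t, fun i j hij hAij hwhite => ?_⟩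
  have hratio : d' i / d' j = d i / d j * Real.exp (t * w (i, j)) := by
    rw [div_eq_neg_div_of_diag_eq_zero hd' hq' (by simpa [Real.exp_ne_zero] using hAij)
        (by simpa [Real.exp_ne_zero] using hwhite),
      div_eq_neg_div_of_diag_eq_zero hd hq hAij hwhite]
    simp only [smul_of, hadamard_apply, map_apply, of_apply, Pi.smul_apply, hij, ↓reduceIte,
      smul_eq_mul, hij.not_gt, mul_zero, Real.exp_zero, mul_one, neg_mul, neg_inj]
    ring
  have hlog := congrArg Real.log hratio
  rw [Real.log_div (hd' i).ne' (hd' j).ne', Real.log_mul (div_pos (hd i) (hd j)).ne'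
    (Real.exp_ne_zero _), Real.log_div (hd i).ne' (hd j).ne', Real.log_exp] at hlog
  field_simp
  linarith

end IsStablyDissipative

theorem Finset.card_eq_two_mul_card_filter_lt {α : Type*} [LinearOrder α] (D : Finset (α × α))
    (hswap : ∀ p ∈ D, p.swap ∈ D) (hdiag : ∀ p ∈ D, p.1 ≠ p.2) :
    #D = 2 * #{p ∈ D | p.1 < p.2} := by
  have hgt : {p ∈ D | ¬ p.1 < p.2} = {p ∈ D | p.1 < p.2}.image Prod.swap := by
    ext ⟨i, j⟩
    simp only [mem_filter, mem_image, Prod.exists, Prod.swap_prod_mk, Prod.mk.injEq]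
    constructor
    · rintro ⟨hD, hij⟩
      exact ⟨j, i, ⟨hswap _ hD, lt_of_le_of_ne (not_lt.mp hij) (hdiag _ hD).symm⟩, rfl, rfl⟩
    · rintro ⟨j, i, ⟨hD, hlt⟩, rfl, rfl⟩
      exact ⟨hswap _ hD, not_lt.mpr hlt.le⟩
  rw [← D.card_filter_add_card_filter_not (fun p => p.1 < p.2), hgt,
    card_image_of_injective _ Prod.swap_injective, two_mul]

theorem Finset.two_mul_card_le_card_of_two_le_fiber {α β : Type*} [DecidableEq α] [DecidableEq β]
    (P : Finset (α × β)) (X : Finset α)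
    (h : ∀ x ∈ X, ∃ y₁ y₂, y₁ ≠ y₂ ∧ (x, y₁) ∈ P ∧ (x, y₂) ∈ P) :
    2 * #X ≤ #P :=
  calc 2 * #X = ∑ _x ∈ X, 2 := by rw [sum_const, smul_eq_mul, mul_comm]
    _ ≤ ∑ x ∈ X, #{p ∈ P | p.1 = x} := sum_le_sum fun x hx => by
        obtain ⟨y₁, y₂, hne, h₁, h₂⟩ := h x hx
        calc 2 = #{(x, y₁), (x, y₂)} := (card_pair (by simpa using hne)).symm
          _ ≤ _ := card_le_card (by simp [insert_subset_iff, h₁, h₂])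
    _ = #{p ∈ P | p.1 ∈ X} := sum_card_fiberwise_eq_card_filter _ _ _
    _ ≤ #P := card_filter_le _ _

theorem Finset.card_add_one_le_of_forall_exists_sub_eq {V : Type*} [DecidableEq V]
    (E : Finset (V × V)) (C : Finset V) (hC : C.Nonempty) (hE : ∀ e ∈ E, e.1 ∈ C ∧ e.2 ∈ C)
    (h : ∀ w : V × V → ℝ, ∃ u : V → ℝ, ∀ e ∈ E, u e.1 - u e.2 = w e) :
    #E + 1 ≤ #C := by
  let φ : (C → ℝ) →ₗ[ℝ] (E → ℝ) := LinearMap.pi fun e =>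
    LinearMap.proj ⟨e.1.1, (hE _ e.2).1⟩ - LinearMap.proj ⟨e.1.2, (hE _ e.2).2⟩
  have hrange : LinearMap.range φ = ⊤ := by
    refine LinearMap.range_eq_top.mpr fun w => ?_
    obtain ⟨u, hu⟩ := h fun p => if hp : p ∈ E then w ⟨p, hp⟩ else 0
    exact ⟨fun c => u c, funext fun e => by simpa [φ, e.2] using hu e.1 e.2⟩
  have hker : LinearMap.ker φ ≠ ⊥ := by
    obtain ⟨c, hc⟩ := hC
    refine (Submodule.ne_bot_iff _).mpr ⟨fun _ => 1, funext fun e => by simp [φ], ?_⟩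
    exact fun h1 => one_ne_zero (congrFun h1 ⟨c, hc⟩)
  have hrank := φ.finrank_range_add_finrank_ker
  have hpos := Submodule.one_le_finrank_iff.mpr hker
  rw [hrange, finrank_top, Module.finrank_fintype_fun_eq_card,
    Module.finrank_fintype_fun_eq_card, Fintype.card_coe, Fintype.card_coe] at hrank
  omega

theorem Matrix.det_eq_zero_of_card_lt {ι K : Type*} [Fintype ι] [DecidableEq ι] [Field K]
    (A : Matrix ι ι K) (R T : Finset ι) (hsupp : ∀ i, ∀ k ∈ T, A i k ≠ 0 → i ∈ R)
    (hcard : #R < #T) : A.det = 0 := by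
  let F : (ι → K) →ₗ[K] (R → K) × (↥Tᶜ → K) :=
    (LinearMap.funLeft K K Subtype.val ∘ₗ A.mulVecLin).prod (LinearMap.funLeft K K Subtype.val)
  have hker : LinearMap.ker F ≠ ⊥ := by
    refine LinearMap.ker_ne_bot_of_finrank_lt ?_
    rw [Module.finrank_prod, Module.finrank_fintype_fun_eq_card, Module.finrank_fintype_fun_eq_card,
      Module.finrank_fintype_fun_eq_card, Fintype.card_coe, Fintype.card_coe, Finset.card_compl]
    have := T.card_le_univ
    omega
  obtain ⟨v, hv, hv0⟩ := Submodule.exists_mem_ne_zero_of_ne_bot hker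
  have hvR : ∀ i ∈ R, (A *ᵥ v) i = 0 := fun i hi =>
    congrFun (congrArg Prod.fst (LinearMap.mem_ker.mp hv)) ⟨i, hi⟩
  have hvT : ∀ k ∉ T, v k = 0 := fun k hk =>
    congrFun (congrArg Prod.snd (LinearMap.mem_ker.mp hv)) ⟨k, Finset.mem_compl.mpr hk⟩
  refine Matrix.exists_mulVec_eq_zero_iff.mp ⟨v, hv0, funext fun i => ?_⟩
  by_cases hi : i ∈ R
  · exact hvR i hi
  refine Finset.sum_eq_zero fun k _ => ?_
  by_cases hk : k ∈ T
  · simp [not_imp_comm.mp (hsupp i k hk) hi]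
  · simp [hvT k hk]

namespace Matrix

variable {ι K : Type*} [Fintype ι] [Zero K]

open Classical in
noncomputable def rowsMeeting (A : Matrix ι ι K) (W : Finset ι) : Finset ι :=
  {i | ∃ k ∈ W, A i k ≠ 0}

open Classical in
noncomputable def touchingPairs (A : Matrix ι ι K) (W : Finset ι) : Finset (ι × ι) :=
  {p | A p.1 p.2 ≠ 0 ∧ (p.1 ∈ W ∨ p.2 ∈ W)}

noncomputable def touchingEdges [LinearOrder ι] (A : Matrix ι ι K) (W : Finset ι) :
    Finset (ι × ι) :=
  {p ∈ A.touchingPairs W | p.1 < p.2}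

variable {A : Matrix ι ι K} {W : Finset ι}

theorem mem_rowsMeeting {i : ι} : i ∈ A.rowsMeeting W ↔ ∃ k ∈ W, A i k ≠ 0 := by
  simp [rowsMeeting]

theorem mem_touchingPairs {p : ι × ι} :
    p ∈ A.touchingPairs W ↔ A p.1 p.2 ≠ 0 ∧ (p.1 ∈ W ∨ p.2 ∈ W) := by
  simp [touchingPairs]

theorem swap_mem_touchingPairs (hsymm : ∀ k ∈ W, ∀ i, A i k ≠ 0 ↔ A k i ≠ 0) {p : ι × ι}
    (hp : p ∈ A.touchingPairs W) : p.swap ∈ A.touchingPairs W := by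
  obtain ⟨i, j⟩ := p
  obtain ⟨hij, hi | hj⟩ := mem_touchingPairs.mp hp
  · exact mem_touchingPairs.mpr ⟨(hsymm i hi j).mpr hij, Or.inr hi⟩
  · exact mem_touchingPairs.mpr ⟨(hsymm j hj i).mp hij, Or.inl hj⟩

variable [LinearOrder ι]

theorem card_touchingPairs (hdiag : ∀ k ∈ W, A k k = 0)
    (hsymm : ∀ k ∈ W, ∀ i, A i k ≠ 0 ↔ A k i ≠ 0) :
    #(A.touchingPairs W) = 2 * #(A.touchingEdges W) := by
  refine card_eq_two_mul_card_filter_lt _ (fun p => swap_mem_touchingPairs hsymm) ?_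
  rintro ⟨i, j⟩ hp (rfl : i = j)
  obtain ⟨hii, hi | hi⟩ := mem_touchingPairs.mp hp <;> exact hii (hdiag i hi)

theorem two_mul_card_rowsMeeting_add_le (hsymm : ∀ k ∈ W, ∀ i, A i k ≠ 0 ↔ A k i ≠ 0)
    (htwo : ∀ i, ∀ k ∈ W, A i k ≠ 0 → ∃ l ∈ W, l ≠ k ∧ A i l ≠ 0) :
    2 * #(A.rowsMeeting W) + 2 * #(A.rowsMeeting W \ W) ≤ #(A.touchingPairs W) := by
  classical
  set P : Finset (ι × ι) := {p | p.2 ∈ W ∧ A p.1 p.2 ≠ 0}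
  have hin : {p ∈ A.touchingPairs W | p.2 ∈ W} = P := by
    ext p; simp only [P, mem_touchingPairs, mem_filter, mem_univ, true_and]; tauto
  have hout : {p ∈ A.touchingPairs W | p.2 ∉ W} = {p ∈ P | p.1 ∉ W}.image Prod.swap := by
    ext ⟨i, j⟩
    simp only [P, mem_touchingPairs, mem_filter, mem_univ, true_and, mem_image, Prod.exists,
      Prod.swap_prod_mk, Prod.mk.injEq]
    constructor
    · rintro ⟨⟨hij, hi | hj⟩, hj'⟩
      exacts [⟨j, i, ⟨⟨hi, (hsymm i hi j).mpr hij⟩, hj'⟩, rfl, rfl⟩, absurd hj hj']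
    · rintro ⟨j, i, ⟨⟨hi, hji⟩, hj⟩, rfl, rfl⟩
      exact ⟨⟨(hsymm i hi j).mp hji, Or.inl hi⟩, hj⟩
  have hfiber : ∀ i ∈ A.rowsMeeting W, ∃ k l, k ≠ l ∧ (i, k) ∈ P ∧ (i, l) ∈ P := by
    intro i hi
    obtain ⟨k, hk, hik⟩ := mem_rowsMeeting.mp hi
    obtain ⟨l, hl, hlk, hil⟩ := htwo i k hk hik
    exact ⟨k, l, hlk.symm, by simp [P, hk, hik], by simp [P, hl, hil]⟩
  have hP := two_mul_card_le_card_of_two_le_fiber P _ hfiber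
  have hP' : 2 * #(A.rowsMeeting W \ W) ≤ #{p ∈ P | p.1 ∉ W} := by
    refine two_mul_card_le_card_of_two_le_fiber _ _ fun i hi => ?_
    obtain ⟨k, l, hkl, hk, hl⟩ := hfiber i (mem_sdiff.mp hi).1
    exact ⟨k, l, hkl, mem_filter.mpr ⟨hk, (mem_sdiff.mp hi).2⟩,
      mem_filter.mpr ⟨hl, (mem_sdiff.mp hi).2⟩⟩
  rw [← (A.touchingPairs W).card_filter_add_card_filter_not (fun p => p.2 ∈ W), hin, hout,
    card_image_of_injective _ Prod.swap_injective]
  omega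

theorem card_touchingEdges_add_one_le (hW : W.Nonempty)
    (hsymm : ∀ k ∈ W, ∀ i, A i k ≠ 0 ↔ A k i ≠ 0)
    (hsurj : ∀ w : ι × ι → ℝ, ∃ u : ι → ℝ, ∀ e ∈ A.touchingEdges W, u e.1 - u e.2 = w e) :
    #(A.touchingEdges W) + 1 ≤ #W + #(A.rowsMeeting W \ W) := by
  have hfst : ∀ p ∈ A.touchingPairs W, p.1 ∈ W ∪ A.rowsMeeting W := by
    rintro ⟨i, j⟩ hp
    obtain ⟨hij, hi | hj⟩ := mem_touchingPairs.mp hp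
    exacts [mem_union_left _ hi, mem_union_right _ (mem_rowsMeeting.mpr ⟨j, hj, hij⟩)]
  have hE := card_add_one_le_of_forall_exists_sub_eq _ _ (hW.mono subset_union_left)
    (fun p hp => ⟨hfst p (mem_filter.mp hp).1, hfst _ (swap_mem_touchingPairs hsymm
      (mem_filter.mp hp).1)⟩) hsurj
  calc #(A.touchingEdges W) + 1 ≤ #(W ∪ A.rowsMeeting W) := hE
    _ ≤ #W + #(A.rowsMeeting W \ W) := by
      rw [← union_sdiff_self_eq_union]
      exact card_union_le _ _

theorem card_rowsMeeting_lt (hW : W.Nonempty) (hdiag : ∀ k ∈ W, A k k = 0)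
    (hsymm : ∀ k ∈ W, ∀ i, A i k ≠ 0 ↔ A k i ≠ 0)
    (htwo : ∀ i, ∀ k ∈ W, A i k ≠ 0 → ∃ l ∈ W, l ≠ k ∧ A i l ≠ 0)
    (hsurj : ∀ w : ι × ι → ℝ, ∃ u : ι → ℝ, ∀ e ∈ A.touchingEdges W, u e.1 - u e.2 = w e) :
    #(A.rowsMeeting W) < #W := by
  have := card_touchingPairs hdiag hsymm
  have := two_mul_card_rowsMeeting_add_le hsymm htwo
  have := card_touchingEdges_add_one_le hW hsymm hsurj
  omega

end Matrix

theorem SimpleGraph.exists_adj_ne_notMem_of_closed {V : Type*} (G : SimpleGraph V) {S : Set V}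
    (hS : ∀ j k, G.Adj j k → (∀ l, G.Adj j l → l = k ∨ l ∈ S) → k ∈ S) {j k : V}
    (hjk : G.Adj j k) (hk : k ∉ S) : ∃ l, G.Adj j l ∧ l ≠ k ∧ l ∉ S := by
  by_contra! h
  exact hk (hS j k hjk fun l hl => or_iff_not_imp_left.mpr (h l hl))

theorem IsStablyDissipative.det_eq_zero_of_rClosed_ne_univ {n : ℕ}
    {A : Matrix (Fin n) (Fin n) ℝ} (hA : IsStablyDissipative A) {S : Set (Fin n)}
    (hblack : {k | A k k < 0} ⊆ S)
    (hS : ∀ j k, (graphOf A).Adj j k → (∀ l, (graphOf A).Adj j l → l = k ∨ l ∈ S) → k ∈ S)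
    (hSne : S ≠ Set.univ) : A.det = 0 := by
  classical
  obtain ⟨d, hd, hq⟩ := hA.isDissipative_s10
  set W : Finset (Fin n) := {k | k ∉ S}
  have hmemW : ∀ k, k ∈ W ↔ k ∉ S := by simp [W]
  have hdiag : ∀ k ∈ W, A k k = 0 := fun k hk =>
    le_antisymm (nonpos_of_mul_nonpos_left (diag_mul_nonpos_of_quadForm_nonpos hq k) (hd k))
      (not_lt.mp fun h => (hmemW k).mp hk (hblack h))
  have hsymm : ∀ k ∈ W, ∀ i, A i k ≠ 0 ↔ A k i ≠ 0 := fun k hk =>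
    ne_zero_iff_of_diag_eq_zero hd hq (hdiag k hk)
  have htwo : ∀ i, ∀ k ∈ W, A i k ≠ 0 → ∃ l ∈ W, l ≠ k ∧ A i l ≠ 0 := by
    intro i k hk hik
    have hadj : (graphOf A).Adj i k := ⟨fun h => hik (h ▸ hdiag k hk), Or.inl hik⟩
    obtain ⟨l, ⟨_, hil⟩, hlk, hl⟩ :=
      (graphOf A).exists_adj_ne_notMem_of_closed hS hadj ((hmemW k).mp hk)
    have hlW := (hmemW l).mpr hl
    exact ⟨l, hlW, hlk, hil.elim id (hsymm l hlW i).mpr⟩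
  have hW : W.Nonempty := by
    obtain ⟨k, hk⟩ := (Set.ne_univ_iff_exists_notMem S).mp hSne
    exact ⟨k, (hmemW k).mpr hk⟩
  have hsurj : ∀ w : Fin n × Fin n → ℝ, ∃ u : Fin n → ℝ,
      ∀ e ∈ A.touchingEdges W, u e.1 - u e.2 = w e := fun w => by
    refine (hA.exists_sub_eq w).imp fun u hu e he => ?_
    obtain ⟨hpair, hlt⟩ := mem_filter.mp he
    obtain ⟨hAe, hend⟩ := mem_touchingPairs.mp hpair
    exact hu e.1 e.2 hlt hAe (hend.imp (hdiag _) (hdiag _))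
  exact A.det_eq_zero_of_card_lt _ W (fun i k hk hik => mem_rowsMeeting.mpr ⟨k, hk, hik⟩)
    (card_rowsMeeting_lt hW hdiag hsymm htwo hsurj)

/-- If `A` is stably dissipative and nonsingular, then the R-closure of `G_A`
is the full vertex set. -/
theorem stmt10 {n : ℕ} (A : Matrix (Fin n) (Fin n) ℝ)
    (hA : IsStablyDissipative A) (hns : A.det ≠ 0) :
    RClosure (graphOf A) {k | A k k < 0} = Set.univ := by
  refine Set.sInter_eq_univ.mpr fun S ⟨hblack, hS⟩ => ?_
  by_contra hSne
  exact hns (hA.det_eq_zero_of_rClosed_ne_univ hblack hS hSne)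
end

section
/- Let G be a stably dissipative black-and-white graph with no ∘-endpoints, i.e. every white vertex has at least two neighbours. Then the R-closure of G equals the full vertex set. -/
/-!
Suppose an R-closed set `S ⊇ black` misses a vertex `v`, and keep only the edges of `G` with an
endpoint outside `S`. Every endpoint `a` of such an edge `ab` has a second such edge: if `a ∉ S`,
then `a` is white with two neighbours; if `b ∉ S`, then rule (R) at `a` fails, so `a` has a
neighbour `l ≠ b` outside `S`. A finite graph in which no vertex has exactly one neighbour and
which has an edge (at the white vertex `v`) contains a cycle, yet none of its edges joins two
black vertices, contradicting stable dissipativity.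
-/

/-- A black-and-white graph is stably dissipative iff every cycle contains at
least one edge joining two black vertices. -/
def IsStablyDissipativeGraph {V : Type*} (G : SimpleGraph V)
    (black : V → Prop) : Prop :=
  ∀ (v : V) (w : G.Walk v v), w.IsCycle →
    ∃ i j : V, s(i, j) ∈ w.edges ∧ black i ∧ black j

namespace SimpleGraph

variable {V : Type*} {G : SimpleGraph V}

theorem not_isAcyclic_of_forall_exists_adj_ne [Finite V] {x y : V} (hxy : G.Adj x y)
    (h : ∀ a b, G.Adj a b → ∃ c, G.Adj a c ∧ c ≠ b) : ¬ G.IsAcyclic := by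
  intro hG
  have : Nonempty V := ⟨x⟩
  obtain ⟨u, v, p, hp, hmax⟩ := Walk.exists_isPath_forall_isPath_length_le_length G
  have hnil : ¬ p.Nil := by
    intro hnil
    simpa [hnil.length_eq_zero] using hmax x y _ (Walk.IsPath.of_adj hxy)
  obtain ⟨c, huc, hcb⟩ := h u p.snd (p.adj_snd hnil)
  have hc : c ∉ p.support := fun hc => hcb (hG.eq_snd_of_adj_start hp huc hc)
  simpa using hmax c v _ (hp.cons hc (h := huc.symm))

end SimpleGraph

open SimpleGraph

section

variable {V : Type*} {G : SimpleGraph V} {S : Set V}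

theorem IsStablyDissipativeGraph.isAcyclic_deleteEdges_sym2 {black : Set V}
    (hsd : IsStablyDissipativeGraph G (· ∈ black)) (hS : black ⊆ S) :
    (G.deleteEdges S.sym2).IsAcyclic := by
  intro a c hc
  obtain ⟨i, j, hij, hi, hj⟩ := hsd a (c.mapLe (G.deleteEdges_le _)) (hc.mapLe _)
  rw [Walk.edges_mapLe_eq_edges] at hij
  have hadj : (G.deleteEdges S.sym2).Adj i j := c.edges_subset_edgeSet hij
  exact (deleteEdges_adj.mp hadj).2 (Set.mk_mem_sym2_iff.2 ⟨hS hi, hS hj⟩)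

def IsRClosed (G : SimpleGraph V) (S : Set V) : Prop :=
  ∀ j k, G.Adj j k → (∀ l, G.Adj j l → l = k ∨ l ∈ S) → k ∈ S

theorem IsRClosed.exists_deleteEdges_sym2_adj_ne (hS : IsRClosed G S)
    (hdeg : ∀ v ∉ S, ∃ u w : V, u ≠ w ∧ G.Adj v u ∧ G.Adj v w)
    {a b : V} (hab : (G.deleteEdges S.sym2).Adj a b) :
    ∃ c, (G.deleteEdges S.sym2).Adj a c ∧ c ≠ b := by
  simp only [deleteEdges_adj, Set.mk_mem_sym2_iff, not_and_or] at hab ⊢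
  obtain ⟨hab, ha | hb⟩ := hab
  · obtain ⟨u, w, huw, hau, haw⟩ := hdeg a ha
    by_cases hub : u = b
    · exact ⟨w, ⟨haw, .inl ha⟩, hub ▸ huw.symm⟩
    · exact ⟨u, ⟨hau, .inl ha⟩, hub⟩
  · have hrule : ¬ ∀ l, G.Adj a l → l = b ∨ l ∈ S := fun h => hb (hS a b hab h)
    push Not at hrule
    obtain ⟨l, hal, hlb, hlS⟩ := hrule
    exact ⟨l, ⟨hal, .inr hlS⟩, hlb⟩

end

/-- If a finite, stably dissipative black-and-white graph has no ∘-endpoints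
(i.e. every white vertex has at least two neighbours), then its R-closure is
the full vertex set. -/
theorem stmt11 {V : Type*} [Fintype V] (G : SimpleGraph V) (black : Set V)
    (hsd : IsStablyDissipativeGraph G (· ∈ black))
    (hend : ∀ v, v ∉ black → ∃ u w : V, u ≠ w ∧ G.Adj v u ∧ G.Adj v w) :
    RClosure G black = Set.univ := by
  refine Set.eq_univ_of_forall fun v => Set.mem_sInter.2 fun S ⟨hblack, hS⟩ => ?_
  by_contra hv
  have hdeg : ∀ a ∉ S, ∃ u w : V, u ≠ w ∧ G.Adj a u ∧ G.Adj a w :=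
    fun a ha => hend a fun h => ha (hblack h)
  obtain ⟨x, -, -, hvx, -⟩ := hdeg v hv
  have hedge : (G.deleteEdges S.sym2).Adj v x := by simp [hvx, hv]
  exact not_isAcyclic_of_forall_exists_adj_ne hedge
    (fun _ _ => IsRClosed.exists_deleteEdges_sym2_adj_ne hS hdeg)
    (hsd.isAcyclic_deleteEdges_sym2 hblack)
end

section
/- Let A be a stably dissipative real n×n matrix, let i be a white vertex of G_A with exactly one neighbour i′, and let T_i(A) be the trimmed matrix. Then T_i(A) is stably dissipative and its graph G_{T_i(A)} is the trimmed graph T_i(G_A), obtained from G_A by removing every edge incident with i′ other than the edge {i, i′}. -/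
open Matrix

/-- The trimmed matrix `T_i(A)`: every entry of row `i'` is set to zero except
`a_{i'i}` and `a_{i'i'}`, and every entry of column `i'` is set to zero except
`a_{ii'}` and `a_{i'i'}`. -/
def trimMatrix {n : ℕ} (A : Matrix (Fin n) (Fin n) ℝ) (i i' : Fin n) :
    Matrix (Fin n) (Fin n) ℝ :=
  fun k l =>
    if k = i' then (if l = i ∨ l = i' then A k l else 0)
    else if l = i' then (if k = i then A k l else 0)
    else A k l

/-- The trimmed graph `T_i(G)`: remove from `G` every edge incident with `i'`
other than the edge `{i, i'}`. -/
def trimGraph {V : Type*} (G : SimpleGraph V) (i i' : V) : SimpleGraph V where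
  Adj k l := G.Adj k l ∧ ((k ≠ i' ∧ l ≠ i') ∨ (k = i ∧ l = i') ∨ (k = i' ∧ l = i))
  symm := by
    constructor
    intro k l h
    exact ⟨h.1.symm, by tauto⟩
  loopless := by
    constructor
    intro k h
    exact G.loopless.irrefl k h.1

/-!
A perturbation `B` of `T_i(A)` becomes a perturbation `C` of `A` once the entries of `A` deleted by
trimming are restored, so `C` is dissipative with some `D`. Row and column `i'` of `B` live on
`{i, i'}` and `b_ii = a_ii = 0`, so `xᵀ B D x = yᵀ C D y + zᵀ C D z`, where `y` is `x` with
`x_{i'}` set to `0` and `z` is `x` restricted to `{i, i'}`: both terms are `≤ 0`.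
-/

section Dissipative

variable {n : ℕ}

theorem sum_quadForm_congr {M N : Matrix (Fin n) (Fin n) ℝ} (d x : Fin n → ℝ)
    (h : ∀ k l, x k ≠ 0 → x l ≠ 0 → M k l = N k l) :
    ∑ k, ∑ l, x k * M k l * d l * x l = ∑ k, ∑ l, x k * N k l * d l * x l := by
  refine Finset.sum_congr rfl fun k _ => Finset.sum_congr rfl fun l _ => ?_
  by_cases hk : x k = 0
  · simp [hk]
  by_cases hl : x l = 0
  · simp [hl]
  rw [h k l hk hl]

/-- The index `i` belongs to both parts of `x`, which is why `M i i = 0` is needed. -/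
theorem sum_quadForm_eq_add {M : Matrix (Fin n) (Fin n) ℝ} {i i' : Fin n} (hii : M i i = 0)
    (hrow : ∀ l, l ≠ i → l ≠ i' → M i' l = 0) (hcol : ∀ k, k ≠ i → k ≠ i' → M k i' = 0)
    (d x : Fin n → ℝ) :
    ∑ k, ∑ l, x k * M k l * d l * x l =
      (∑ k, ∑ l, Function.update x i' 0 k * M k l * d l * Function.update x i' 0 l) +
      ∑ k, ∑ l, (if k = i ∨ k = i' then x k else 0) * M k l * d l *
        (if l = i ∨ l = i' then x l else 0) := by
  simp only [← Finset.sum_add_distrib]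
  refine Finset.sum_congr rfl fun k _ => Finset.sum_congr rfl fun l _ => ?_
  by_cases hk : k = i' <;> by_cases hl : l = i' <;> by_cases hki : k = i <;> by_cases hli : l = i
  all_goals simp_all

theorem IsDissipative.of_agree_off_and_on_pair {B C : Matrix (Fin n) (Fin n) ℝ} {i i' : Fin n}
    (hC : IsDissipative C) (hBii : B i i = 0)
    (hrow : ∀ l, l ≠ i → l ≠ i' → B i' l = 0) (hcol : ∀ k, k ≠ i → k ≠ i' → B k i' = 0)
    (hoff : ∀ k l, k ≠ i' → l ≠ i' → C k l = B k l)
    (hpair : ∀ k l, (k = i ∨ k = i') → (l = i ∨ l = i') → C k l = B k l) :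
    IsDissipative B := by
  obtain ⟨d, hd, hQ⟩ := hC
  refine ⟨d, hd, fun x => ?_⟩
  rw [sum_quadForm_eq_add hBii hrow hcol]
  refine add_nonpos ((sum_quadForm_congr d _ fun k l hk hl => ?_).trans_le (hQ _))
    ((sum_quadForm_congr d _ fun k l hk hl => ?_).trans_le (hQ _))
  · refine (hoff k l ?_ ?_).symm <;> rintro rfl <;> simp_all
  · refine (hpair k l ?_ ?_).symm <;> by_contra h <;> simp_all

/-- The lift `C` puts back the entries of `A` where `T` vanishes. -/
theorem exists_perturbation_lift {A T B : Matrix (Fin n) (Fin n) ℝ} {ε : ℝ} (hε : 0 < ε)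
    (hT : ∀ k l, T k l ≠ 0 → T k l = A k l)
    (hpat : ∀ k l, B k l = 0 ↔ T k l = 0) (hclose : ∀ k l, |T k l - B k l| < ε) :
    ∃ C : Matrix (Fin n) (Fin n) ℝ, (∀ k l, C k l = 0 ↔ A k l = 0) ∧
      (∀ k l, |A k l - C k l| < ε) ∧ ∀ k l, T k l = A k l → C k l = B k l := by
  refine ⟨fun k l => if T k l = 0 then A k l else B k l, fun k l => ?_, fun k l => ?_,
    fun k l hTA => ?_⟩
  · by_cases h : T k l = 0
    · simp [h]
    · simp only [if_neg h, hpat, ← hT k l h]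
  · by_cases h : T k l = 0
    · simpa [h] using hε
    · simpa only [if_neg h, ← hT k l h] using hclose k l
  · by_cases h : T k l = 0
    · simp [h, (hpat k l).2 h, ← hTA]
    · simp [h]

end Dissipative

section Trim

variable {n : ℕ} (A : Matrix (Fin n) (Fin n) ℝ) (i i' : Fin n)

theorem trimMatrix_eq_of_ne_zero (k l : Fin n) (h : trimMatrix A i i' k l ≠ 0) :
    trimMatrix A i i' k l = A k l := by
  unfold trimMatrix at *
  split_ifs at * <;> first | rfl | exact absurd rfl h

theorem trimMatrix_apply_of_ne (k l : Fin n) (hk : k ≠ i') (hl : l ≠ i') :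
    trimMatrix A i i' k l = A k l := by
  simp [trimMatrix, hk, hl]

theorem trimMatrix_apply_of_mem_pair (k l : Fin n) (hk : k = i ∨ k = i') (hl : l = i ∨ l = i') :
    trimMatrix A i i' k l = A k l := by
  unfold trimMatrix
  split_ifs <;> tauto

theorem trimMatrix_apply_self (k : Fin n) : trimMatrix A i i' k k = A k k := by
  by_cases hk : k = i' <;> simp [trimMatrix, hk]

theorem trimMatrix_row_eq_zero (l : Fin n) (hi : l ≠ i) (hi' : l ≠ i') :
    trimMatrix A i i' i' l = 0 := by
  simp [trimMatrix, hi, hi']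

theorem trimMatrix_col_eq_zero (k : Fin n) (hi : k ≠ i) (hi' : k ≠ i') :
    trimMatrix A i i' k i' = 0 := by
  simp [trimMatrix, hi, hi']

theorem graphOf_trimMatrix : graphOf (trimMatrix A i i') = trimGraph (graphOf A) i i' := by
  ext k l
  simp only [graphOf, trimGraph, trimMatrix]
  by_cases hk : k = i' <;> by_cases hl : l = i' <;> by_cases hki : k = i <;> by_cases hli : l = i
  all_goals simp_all

theorem isStablyDissipative_trimMatrix {A : Matrix (Fin n) (Fin n) ℝ} (hA : IsStablyDissipative A)
    (hwhite : A i i = 0) : IsStablyDissipative (trimMatrix A i i') := by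
  obtain ⟨ε, hε, hstab⟩ := hA
  refine ⟨ε, hε, fun B hpat hclose => ?_⟩
  obtain ⟨C, hCpat, hCclose, hCB⟩ :=
    exists_perturbation_lift hε (trimMatrix_eq_of_ne_zero A i i') hpat hclose
  have hBzero : ∀ k l, trimMatrix A i i' k l = 0 → B k l = 0 := fun k l => (hpat k l).2
  exact (hstab C hCpat hCclose).of_agree_off_and_on_pair
    (hBzero i i (by rw [trimMatrix_apply_self, hwhite]))
    (fun l hi hi' => hBzero _ _ (trimMatrix_row_eq_zero A i i' l hi hi'))
    (fun k hi hi' => hBzero _ _ (trimMatrix_col_eq_zero A i i' k hi hi'))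
    (fun k l hk hl => hCB k l (trimMatrix_apply_of_ne A i i' k l hk hl))
    (fun k l hk hl => hCB k l (trimMatrix_apply_of_mem_pair A i i' k l hk hl))

end Trim

theorem stmt12_general {n : ℕ} (A : Matrix (Fin n) (Fin n) ℝ)
    (hA : IsStablyDissipative A) (i i' : Fin n)
    (hwhite : A i i = 0) :
    IsStablyDissipative (trimMatrix A i i') ∧
    graphOf (trimMatrix A i i') = trimGraph (graphOf A) i i' ∧
    ∀ k, trimMatrix A i i' k k = A k k :=
  ⟨isStablyDissipative_trimMatrix i i' hA hwhite, graphOf_trimMatrix A i i',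
    trimMatrix_apply_self A i i'⟩

/-- Let `A` be stably dissipative, and let `i` be a white vertex of `G_A` with
exactly one neighbour `i'` (a ∘-endpoint).  Then the trimmed matrix `T_i(A)`
is stably dissipative, its graph is the trimmed graph `T_i(G_A)`, and its
diagonal (hence the vertex colouring) is unchanged. -/
theorem stmt12 {n : ℕ} (A : Matrix (Fin n) (Fin n) ℝ)
    (hA : IsStablyDissipative A) (i i' : Fin n)
    (hwhite : A i i = 0)
    (hadj : (graphOf A).Adj i i')
    (huniq : ∀ j, (graphOf A).Adj i j → j = i') :
    IsStablyDissipative (trimMatrix A i i') ∧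
    graphOf (trimMatrix A i i') = trimGraph (graphOf A) i i' ∧
    ∀ k, trimMatrix A i i' k k = A k k :=
  stmt12_general A hA i i' hwhite
end

section
/- Let A be a stably dissipative real n×n matrix and let i be a white vertex of G_A with exactly one neighbour i′. Then the trimmed matrix T_i(A) has the same rank as A: rank(T_i(A)) = rank(A). -/
/-!
If `xᵀ A D x ≤ 0` and `aᵢᵢ = 0`, restricting the form to the plane of `eᵢ, eⱼ` forces
`aᵢⱼ dⱼ + aⱼᵢ dᵢ = 0`. For the endpoint `i` this makes both `aᵢᵢ'` and `aᵢ'ᵢ` nonzero, while the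
rest of row and column `i` vanishes. The trimmed matrix is then obtained from `A` by adding
multiples of row `i` to the other rows and multiples of column `i` to the other columns, which
preserves the rank.
-/

open Matrix

namespace Matrix

variable {m n R : Type*} [CommRing R]

theorem det_one_add_vecMulVec [Fintype m] [DecidableEq m] (u v : m → R) :
    (1 + vecMulVec u v).det = 1 + v ⬝ᵥ u := by
  rw [vecMulVec_eq Unit, det_one_add_replicateCol_mul_replicateRow]

theorem one_add_vecMulVec_mul_mul_one_add_vecMulVec_apply [Fintype m] [DecidableEq m]
    {A : Matrix m m R} {i : m} (hii : A i i = 0) (u w : m → R) (k l : m) :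
    ((1 + vecMulVec u (Pi.single i 1)) * A * (1 + vecMulVec (Pi.single i 1) w)) k l
      = A k l + u k * A i l + A k i * w l := by
  simp only [Matrix.add_mul, Matrix.mul_add, Matrix.one_mul, Matrix.mul_one, vecMulVec_mul,
    mul_vecMulVec]
  simp [vecMulVec_apply, hii]

variable [IsDomain R] [Fintype n]

theorem rank_one_add_vecMulVec_mul [Fintype m] [DecidableEq m] {u v : m → R}
    (h : 1 + v ⬝ᵥ u ≠ 0) (A : Matrix m n R) : ((1 + vecMulVec u v) * A).rank = A.rank :=
  rank_mul_eq_right_of_det_ne_zero _ A (by rwa [det_one_add_vecMulVec])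

theorem rank_mul_one_add_vecMulVec [DecidableEq n] {u v : n → R} (h : 1 + v ⬝ᵥ u ≠ 0)
    (A : Matrix m n R) : (A * (1 + vecMulVec u v)).rank = A.rank :=
  rank_mul_eq_left_of_det_ne_zero _ A (by rwa [det_one_add_vecMulVec])

end Matrix

theorem eq_zero_of_forall_mul_add_nonpos_s13 {s c : ℝ} (h : ∀ t, t * s + c ≤ 0) : s = 0 := by
  by_contra hs
  have := h ((1 - c) / s)
  rw [div_mul_cancel₀ _ hs] at this
  linarith

theorem eq_zero_iff_of_mul_add_mul_eq_zero {a b p q : ℝ} (hp : 0 < p) (hq : 0 < q)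
    (h : a * p + b * q = 0) : a = 0 ↔ b = 0 := by
  constructor <;> rintro rfl <;> simp_all [hp.ne', hq.ne']

/-- With `D = diagonal d`, this says `(A D)ᵢⱼ + (A D)ⱼᵢ = 0`: on the plane spanned by `eᵢ, eⱼ`
the form `xᵀ A D x` has no `xᵢ²` term, so its `xᵢxⱼ` coefficient must vanish. -/
theorem mul_add_mul_eq_zero_of_quadForm_nonpos {ι : Type*} [Fintype ι] [DecidableEq ι]
    {A : Matrix ι ι ℝ} {d : ι → ℝ} (hq : ∀ x : ι → ℝ, ∑ i, ∑ j, x i * A i j * d j * x j ≤ 0)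
    {i : ι} (hii : A i i = 0) (j : ι) : A i j * d j + A j i * d i = 0 := by
  rcases eq_or_ne j i with rfl | hji
  · simp [hii]
  refine eq_zero_of_forall_mul_add_nonpos_s13 (c := A j j * d j) fun t => ?_
  convert hq (fun k => t * (if k = i then 1 else 0) + (if k = j then 1 else 0)) using 1
  simp only [add_mul, mul_add, Finset.sum_add_distrib, mul_ite, ite_mul, mul_one, mul_zero,
    zero_mul, one_mul, Finset.sum_ite_eq', Finset.mem_univ, if_true, hii]
  ring

section Dissipative

variable {n : ℕ} {A : Matrix (Fin n) (Fin n) ℝ}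

theorem IsDissipative.apply_ne_zero_of_adj (hA : IsDissipative A) {i j : Fin n}
    (hii : A i i = 0) (hadj : (graphOf A).Adj i j) : A i j ≠ 0 ∧ A j i ≠ 0 := by
  obtain ⟨d, hd, hq⟩ := hA
  have hiff := eq_zero_iff_of_mul_add_mul_eq_zero (hd j) (hd i)
    (mul_add_mul_eq_zero_of_quadForm_nonpos hq hii j)
  obtain ⟨-, hij | hji⟩ := hadj
  · exact ⟨hij, mt hiff.mpr hij⟩
  · exact ⟨mt hiff.mp hji, hji⟩

end Dissipative

theorem apply_eq_zero_of_forall_adj_eq {n : ℕ} {A : Matrix (Fin n) (Fin n) ℝ} {i i' : Fin n}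
    (hii : A i i = 0) (huniq : ∀ j, (graphOf A).Adj i j → j = i') {l : Fin n} (hl : l ≠ i') :
    A i l = 0 ∧ A l i = 0 := by
  rcases eq_or_ne l i with rfl | hli
  · exact ⟨hii, hii⟩
  have hnadj : ¬ (graphOf A).Adj i l := mt (huniq l) hl
  simp only [graphOf, ne_eq, not_and, not_or, not_not] at hnadj
  exact hnadj (Ne.symm hli)

/-- Row `i` is used to clear column `i'` and column `i` to clear row `i'`; since row and column
`i` are supported at `i'` only, nothing else changes. -/
theorem trimMatrix_eq_mul {n : ℕ} (A : Matrix (Fin n) (Fin n) ℝ) {i i' : Fin n} (hii' : i ≠ i')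
    (hrow : ∀ l ≠ i', A i l = 0) (hcol : ∀ k ≠ i', A k i = 0) (ha : A i i' ≠ 0)
    (hb : A i' i ≠ 0) :
    trimMatrix A i i' =
      (1 + vecMulVec (fun k => if k = i ∨ k = i' then 0 else -(A k i' / A i i')) (Pi.single i 1))
        * A * (1 + vecMulVec (Pi.single i 1)
          (fun l => if l = i ∨ l = i' then 0 else -(A i' l / A i' i))) := by
  ext k l
  rw [Matrix.one_add_vecMulVec_mul_mul_one_add_vecMulVec_apply (hrow i hii')]
  unfold trimMatrix
  by_cases hk : k = i'
  · by_cases hl : l = i ∨ l = i'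
    · simp [hk, hl]
    · simp only [hk, hl, or_true, if_true, if_false]
      field_simp
      ring
  · by_cases hl : l = i'
    · by_cases hki : k = i
      · simp [hki, hl]
      · simp only [hk, hki, hl, or_self, or_true, if_false, if_true]
        field_simp
        ring
    · simp [hk, hl, hrow l hl, hcol k hk]

/-- Let `A` be stably dissipative and let `i` be a white vertex of `G_A` with
exactly one neighbour `i'` (a ∘-endpoint).  Then the trimmed matrix has the
same rank as `A`. -/
theorem stmt13 {n : ℕ} (A : Matrix (Fin n) (Fin n) ℝ)
    (hA : IsStablyDissipative A) (i i' : Fin n)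
    (hwhite : A i i = 0)
    (hadj : (graphOf A).Adj i i')
    (huniq : ∀ j, (graphOf A).Adj i j → j = i') :
    (trimMatrix A i i').rank = A.rank := by
  obtain ⟨ha, hb⟩ := hA.isDissipative.apply_ne_zero_of_adj hwhite hadj
  have hsupp := fun l (hl : l ≠ i') => apply_eq_zero_of_forall_adj_eq hwhite huniq hl
  have hii' : i ≠ i' := hadj.ne
  rw [trimMatrix_eq_mul A hii' (fun l hl => (hsupp l hl).1) (fun k hk => (hsupp k hk).2) ha hb,
    Matrix.rank_mul_one_add_vecMulVec, Matrix.rank_one_add_vecMulVec_mul] <;>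
    simp [hii']
end

section
/- Let A be a dissipative real n×n matrix with positive diagonal matrix D = diag(d_1,…,d_n) witnessing dissipativity, and let q ∈ ℝⁿ₊. Define h : ℝⁿ₊ → ℝ by h(x) = ∑_{i=1}^n (x_i − q_i log x_i)/d_i. Then for every x ∈ ℝⁿ₊ the derivative of h along the vector field X_{A,q} satisfies ∑_{i=1}^n (∂h/∂x_i)(x) · (X_{A,q}(x))_i = ∑_{i,j=1}^n (a_ij/d_i)(x_i − q_i)(x_j − q_j) = (x − q)ᵀ D⁻¹ A (x − q) ≤ 0, so h is a Lyapunov function for X_{A,q}, decreasing along its orbits. -/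
/-!
Along `X_{A,q}` the factor `x_i` of the vector field cancels the `1 / x_i` in
`∂h/∂x_i = (1 - q_i / x_i) / d_i`, so `ḣ = (x - q)ᵀ D⁻¹ A (x - q)`. Substituting
`y = D⁻¹ (x - q)` turns this into `yᵀ A D y`, which is nonpositive by dissipativity.
-/

open Matrix

theorem hasDerivAt_sub_mul_log_div (q d : ℝ) {t : ℝ} (ht : t ≠ 0) :
    HasDerivAt (fun s => (s - q * Real.log s) / d) ((1 - q / t) / d) t := by
  simpa [div_eq_mul_inv] using
    ((hasDerivAt_id t).sub ((Real.hasDerivAt_log ht).const_mul q)).div_const d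

section

variable {ι : Type*} [Fintype ι]

theorem hasFDerivAt_sum_sub_mul_log_div (q d x : ι → ℝ) (hx : ∀ i, x i ≠ 0) :
    HasFDerivAt (fun y : ι → ℝ => ∑ i, (y i - q i * Real.log (y i)) / d i)
      (∑ i, ((1 - q i / x i) / d i) • ContinuousLinearMap.proj (R := ℝ) (φ := fun _ : ι => ℝ) i)
      x :=
  HasFDerivAt.fun_sum fun i _ =>
    (hasDerivAt_sub_mul_log_div (q i) (d i) (hx i)).comp_hasFDerivAt (f := fun y : ι → ℝ => y i) x
      (hasFDerivAt_apply i x)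

theorem fderiv_sum_sub_mul_log_div_apply (q d x v : ι → ℝ) (hx : ∀ i, x i ≠ 0) :
    fderiv ℝ (fun y : ι → ℝ => ∑ i, (y i - q i * Real.log (y i)) / d i) x v =
      ∑ i, (1 - q i / x i) * v i / d i := by
  rw [(hasFDerivAt_sum_sub_mul_log_div q d x hx).fderiv]
  simp [div_mul_eq_mul_div]

theorem fderiv_sum_sub_mul_log_div_lotkaVolterra (A : Matrix ι ι ℝ) (q d x : ι → ℝ)
    (hx : ∀ i, x i ≠ 0) :
    fderiv ℝ (fun y : ι → ℝ => ∑ i, (y i - q i * Real.log (y i)) / d i) x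
        (fun i => x i * (A *ᵥ (x - q)) i) =
      ∑ i, ∑ j, A i j / d i * (x i - q i) * (x j - q j) := by
  rw [fderiv_sum_sub_mul_log_div_apply q d x _ hx]
  refine Finset.sum_congr rfl fun i _ => ?_
  have hcancel : (1 - q i / x i) * x i = x i - q i := by
    rw [sub_mul, one_mul, div_mul_cancel₀ _ (hx i)]
  rw [← mul_assoc, hcancel, mulVec, dotProduct, Finset.mul_sum, Finset.sum_div]
  refine Finset.sum_congr rfl fun j _ => ?_
  simp only [Pi.sub_apply]
  ring

theorem sum_sum_div_mul_mul_nonpos (A : Matrix ι ι ℝ) {d : ι → ℝ} (hd : ∀ i, d i ≠ 0)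
    (hdiss : ∀ y : ι → ℝ, ∑ i, ∑ j, y i * A i j * d j * y j ≤ 0) (v : ι → ℝ) :
    ∑ i, ∑ j, A i j / d i * v i * v j ≤ 0 := by
  convert hdiss (fun i => v i / d i) using 3 with i _ j _
  field_simp [hd i, hd j]

variable [DecidableEq ι] {K : Type*} [Field K]

theorem inv_diagonal_of_ne_zero {d : ι → K} (hd : ∀ i, d i ≠ 0) :
    (diagonal d)⁻¹ = diagonal d⁻¹ := by
  refine inv_eq_left_inv ?_
  rw [diagonal_mul_diagonal, ← diagonal_one]
  congr 1
  funext i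
  exact inv_mul_cancel₀ (hd i)

theorem dotProduct_diagonal_inv_mul_mulVec (A : Matrix ι ι K) {d : ι → K} (hd : ∀ i, d i ≠ 0)
    (v : ι → K) :
    v ⬝ᵥ ((diagonal d)⁻¹ * A) *ᵥ v = ∑ i, ∑ j, A i j / d i * v i * v j := by
  rw [inv_diagonal_of_ne_zero hd, ← mulVec_mulVec]
  simp only [dotProduct, mulVec_diagonal]
  simp only [mulVec, dotProduct, Finset.mul_sum, Pi.inv_apply]
  refine Finset.sum_congr rfl fun i _ => Finset.sum_congr rfl fun j _ => ?_
  ring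

end

theorem stmt15_general {n : ℕ} (A : Matrix (Fin n) (Fin n) ℝ) (d : Fin n → ℝ)
    (hd : ∀ i, 0 < d i)
    (hdiss : ∀ x : Fin n → ℝ, ∑ i, ∑ j, x i * A i j * d j * x j ≤ 0)
    (q : Fin n → ℝ)
    (x : Fin n → ℝ) (hx : ∀ i, 0 < x i) :
    fderiv ℝ (fun y : Fin n → ℝ => ∑ i, (y i - q i * Real.log (y i)) / d i) x
        (fun i => x i * A.mulVec (x - q) i) =
      ∑ i, ∑ j, (A i j / d i) * (x i - q i) * (x j - q j) ∧
    (∑ i, ∑ j, (A i j / d i) * (x i - q i) * (x j - q j)) =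
      (x - q) ⬝ᵥ ((Matrix.diagonal d)⁻¹ * A).mulVec (x - q) ∧
    (x - q) ⬝ᵥ ((Matrix.diagonal d)⁻¹ * A).mulVec (x - q) ≤ 0 := by
  have hd0 : ∀ i, d i ≠ 0 := fun i => (hd i).ne'
  have hquad := dotProduct_diagonal_inv_mul_mulVec A hd0 (x - q)
  simp only [Pi.sub_apply] at hquad
  refine ⟨fderiv_sum_sub_mul_log_div_lotkaVolterra A q d x fun i => (hx i).ne', hquad.symm, ?_⟩
  rw [hquad]
  exact sum_sum_div_mul_mul_nonpos A hd0 hdiss (x - q)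

/-- Let `A` be a dissipative matrix with positive diagonal matrix
`D = diag d` witnessing dissipativity (`xᵀ A D x ≤ 0` for all `x`), and let
`q` lie in the open positive orthant.  Then for every `x` in the open positive
orthant, the derivative of the Lyapunov function
`h(x) = ∑ i, (x i - q i * log (x i)) / d i` along the Lotka–Volterra vector
field `X_{A,q}(x) = x ∗ A(x - q)` equals
`∑ i ∑ j (a_ij / d_i) (x_i - q_i) (x_j - q_j) = (x - q)ᵀ D⁻¹ A (x - q) ≤ 0`:
`h` decreases along orbits of `X_{A,q}`. -/
theorem stmt15 {n : ℕ} (A : Matrix (Fin n) (Fin n) ℝ) (d : Fin n → ℝ)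
    (hd : ∀ i, 0 < d i)
    (hdiss : ∀ x : Fin n → ℝ, ∑ i, ∑ j, x i * A i j * d j * x j ≤ 0)
    (q : Fin n → ℝ) (hq : ∀ i, 0 < q i)
    (x : Fin n → ℝ) (hx : ∀ i, 0 < x i) :
    fderiv ℝ (fun y : Fin n → ℝ => ∑ i, (y i - q i * Real.log (y i)) / d i) x
        (fun i => x i * A.mulVec (x - q) i) =
      ∑ i, ∑ j, (A i j / d i) * (x i - q i) * (x j - q j) ∧
    (∑ i, ∑ j, (A i j / d i) * (x i - q i) * (x j - q j)) =
      (x - q) ⬝ᵥ ((Matrix.diagonal d)⁻¹ * A).mulVec (x - q) ∧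
    (x - q) ⬝ᵥ ((Matrix.diagonal d)⁻¹ * A).mulVec (x - q) ≤ 0 :=
  stmt15_general A d hd hdiss q x hx
end
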